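/- Fix a density operator ρ on H₁ and define for density operators φ on H₂ the payoff K(ρ,φ) = ∫_{I_R}∫_{I_B} Z(λ,l) dF_ρ(λ) dG_φ(l), with F_ρ(λ)=tr(ρE(λ)), G_φ(l)=tr(φE′(l)) and Z continuous nonnegative with maximum M on the compact rectangle I_B×I_R. Then for density operators φ₁, φ₂: |K(ρ,φ₁) − K(ρ,φ₂)| ≤ M ‖φ₁ − φ₂‖₁. In particular, φ ↦ K(ρ,φ) is Lipschitz continuous in trace norm. -/

import Mathlib

/-!
Write `Δ = φ₁ - φ₂ = Δ⁺ - Δ⁻`. For a positive trace-class `A` and `0 ≤ S ≤ 1` one has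
`tr (A S) = tr (√A S √A) ∈ [0, tr A]`, so along a spectral resolution `E` the function
`l ↦ Re tr (A E l)` increases, by at most `tr A` in total. Hence `G_φ₁ - G_φ₂ = G_Δ⁺ - G_Δ⁻` is a
difference of increasing functions of total increase at most `tr Δ⁺ + tr Δ⁻ = ‖Δ‖₁`, while the
inner integral `g l = ∫ Z(λ, l) dF_ρ(λ)` is bounded by `M` because `F_ρ` increases by at most
`tr ρ = 1`. Every Riemann–Stieltjes sum of `g` against `G_φ₁ - G_φ₂`, hence also `K₁ - K₂`, is then
bounded by `M ‖Δ‖₁`.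

That `Δ⁺` is trace class at all comes from `Δ⁺ ≤ Δ S + ε` for a function `0 ≤ S ≤ 1` of `Δ` with
`Δ S ≥ 0`: the diagonal of `Δ S = φ₁ S - φ₂ S` sums to at most `tr φ₁`.
-/

open scoped InnerProductSpace
open Filter
noncomputable section

variable {H : Type*} [NormedAddCommGroup H] [InnerProductSpace ℂ H] [CompleteSpace H]
variable {ι : Type*}

/-- The trace of an operator computed along a Hilbert basis. -/
def traceAlong (e : HilbertBasis ι ℂ H) (T : H →L[ℂ] H) : ℂ := ∑' i, ⟪e i, T (e i)⟫_ℂ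

/-- The trace norm `tr √(T*T)` computed along a Hilbert basis. -/
def traceNormAlong (e : HilbertBasis ι ℂ H) (T : H →L[ℂ] H) : ℝ :=
  ∑' i, (⟪e i, (CFC.sqrt (star T * T)) (e i)⟫_ℂ).re

/-- `T` is trace class: the diagonal of `√(T*T)` is summable. -/
def IsTraceClassAlong (e : HilbertBasis ι ℂ H) (T : H →L[ℂ] H) : Prop :=
  Summable fun i => (⟪e i, (CFC.sqrt (star T * T)) (e i)⟫_ℂ).re

/-- A density operator: positive with trace one. -/
def IsDensityOperator (e : HilbertBasis ι ℂ H) (ρ : H →L[ℂ] H) : Prop :=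
  ρ.IsPositive ∧ HasSum (fun i => (⟪e i, ρ (e i)⟫_ℂ).re) 1

/-- Trace-norm distance between two operators. -/
def traceDist (e : HilbertBasis ι ℂ H) (ρ φ : H →L[ℂ] H) : ℝ := traceNormAlong e (ρ - φ)

/-- An orthogonal projection. -/
def IsProjection (P : H →L[ℂ] H) : Prop := IsSelfAdjoint P ∧ IsIdempotentElem P

/-- A spectral resolution: an increasing family of orthogonal projections. -/
def IsSpectralResolution (E : ℝ → H →L[ℂ] H) : Prop :=
  (∀ l, IsProjection (E l)) ∧ ∀ l m : ℝ, l ≤ m → (E m - E l).IsPositive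

/-- Lower bound `m(T)` of the quadratic form of `T` over unit vectors. -/
def lowerBound (T : H →L[ℂ] H) : ℝ := sInf ((fun x => (⟪T x, x⟫_ℂ).re) '' {x : H | ‖x‖ = 1})

/-- Upper bound `M(T)` of the quadratic form of `T` over unit vectors. -/
def upperBound (T : H →L[ℂ] H) : ℝ := sSup ((fun x => (⟪T x, x⟫_ℂ).re) '' {x : H | ‖x‖ = 1})

/-- A Riemann–Stieltjes sum of `f` with respect to `F` for a tagged partition. -/
def RSSum (f F : ℝ → ℝ) (n : ℕ) (x t : ℕ → ℝ) : ℝ :=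
  ∑ i ∈ Finset.range n, f (t i) * (F (x (i + 1)) - F (x i))

/-- `I` is the Riemann–Stieltjes integral `∫_a^b f dF`. -/
def IsRSIntegral (f F : ℝ → ℝ) (a b I : ℝ) : Prop :=
  ∀ ε > 0, ∃ δ > 0, ∀ (n : ℕ) (x t : ℕ → ℝ),
    0 < n → x 0 = a → x n = b → (∀ i < n, x i ≤ x (i + 1)) →
    (∀ i < n, x (i + 1) - x i < δ) → (∀ i < n, t i ∈ Set.Icc (x i) (x (i + 1))) →
    |RSSum f F n x t - I| < ε

namespace HilbertBasis

variable {𝕜 E ι κ : Type*} [RCLike 𝕜] [NormedAddCommGroup E] [InnerProductSpace 𝕜 E]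
  (b : HilbertBasis ι 𝕜 E)

theorem hasSum_norm_inner_sq (x : E) : HasSum (fun i => ‖⟪b i, x⟫_𝕜‖ ^ 2) (‖x‖ ^ 2) := by
  simpa [b.repr_apply_apply] using lp.hasSum_norm (p := 2) (by norm_num) (b.repr x)

theorem summable_prod_norm_inner_sq {x : κ → E} (hx : Summable fun j => ‖x j‖ ^ 2) :
    Summable fun p : κ × ι => ‖⟪b p.2, x p.1⟫_𝕜‖ ^ 2 := by
  refine (summable_prod_of_nonneg fun _ => by positivity).mpr
    ⟨fun j => (b.hasSum_norm_inner_sq (x j)).summable, ?_⟩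
  simpa only [fun j => (b.hasSum_norm_inner_sq (x j)).tsum_eq] using hx

theorem summable_prod_inner_mul_inner {x y : κ → E} (hx : Summable fun j => ‖x j‖ ^ 2)
    (hy : Summable fun j => ‖y j‖ ^ 2) :
    Summable fun p : κ × ι => ⟪x p.1, b p.2⟫_𝕜 * ⟪b p.2, y p.1⟫_𝕜 := by
  refine Summable.of_norm_bounded
    (((b.summable_prod_norm_inner_sq hx).add (b.summable_prod_norm_inner_sq hy)).div_const 2)
    fun p => ?_
  rw [norm_mul, ← inner_conj_symm, RCLike.norm_conj]
  nlinarith [two_mul_le_add_sq ‖⟪b p.2, x p.1⟫_𝕜‖ ‖⟪b p.2, y p.1⟫_𝕜‖]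

end HilbertBasis

open ContinuousLinearMap

section

variable {E κ : Type*} [NormedAddCommGroup E] [InnerProductSpace ℂ E]

theorem ContinuousLinearMap.re_inner_apply_nonneg {X : E →L[ℂ] E} (hX : 0 ≤ X) (x : E) :
    0 ≤ (⟪x, X x⟫_ℂ).re :=
  ((nonneg_iff_isPositive X).mp hX).re_inner_nonneg_right x

theorem ContinuousLinearMap.re_inner_apply_le_of_le {X Y : E →L[ℂ] E} (h : X ≤ Y) (x : E) :
    (⟪x, X x⟫_ℂ).re ≤ (⟪x, Y x⟫_ℂ).re := by
  simpa [inner_sub_right] using ((le_def X Y).mp h).re_inner_nonneg_right x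

theorem traceAlong_sub (b : HilbertBasis κ ℂ E) {X Y : E →L[ℂ] E}
    (hX : Summable fun k => ⟪b k, X (b k)⟫_ℂ) (hY : Summable fun k => ⟪b k, Y (b k)⟫_ℂ) :
    traceAlong b (X - Y) = traceAlong b X - traceAlong b Y := by
  simp only [traceAlong, sub_apply, inner_sub_right]
  exact hX.tsum_sub hY

theorem IsDensityOperator.nonneg {b : HilbertBasis κ ℂ E} {ρ : E →L[ℂ] E}
    (hρ : IsDensityOperator b ρ) : 0 ≤ ρ :=
  (nonneg_iff_isPositive ρ).mpr hρ.1

theorem lowerBound_le_upperBound (T : E →L[ℂ] E) : lowerBound T ≤ upperBound T := by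
  have hT : ∀ y ∈ (fun x => (⟪T x, x⟫_ℂ).re) '' {x : E | ‖x‖ = 1}, |y| ≤ ‖T‖ := by
    rintro _ ⟨x, hx : ‖x‖ = 1, rfl⟩
    calc |(⟪T x, x⟫_ℂ).re| ≤ ‖T x‖ * ‖x‖ :=
          (Complex.abs_re_le_norm _).trans (norm_inner_le_norm _ _)
      _ ≤ ‖T‖ := by simpa [hx] using T.le_opNorm x
  exact Real.sInf_le_sSup _ ⟨-‖T‖, fun y hy => (abs_le.mp (hT y hy)).1⟩
    ⟨‖T‖, fun y hy => (abs_le.mp (hT y hy)).2⟩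

end

theorem ContinuousLinearMap.re_inner_apply_eq_norm_sqrt_apply_sq {A : H →L[ℂ] H} (hA : 0 ≤ A)
    (x : H) : (⟪x, A x⟫_ℂ).re = ‖CFC.sqrt A x‖ ^ 2 := by
  conv_lhs => rw [← CFC.sqrt_mul_sqrt_self A hA, mul_apply_eq_comp,
    ← (CFC.sqrt_nonneg A).isSelfAdjoint.isSymmetric.apply_clm]
  exact inner_self_eq_norm_sq (𝕜 := ℂ) _

theorem IsSelfAdjoint.exists_posPart_le_mul_add {𝒜 : Type*} [CStarAlgebra 𝒜] [PartialOrder 𝒜]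
    [StarOrderedRing 𝒜] {T : 𝒜} (hT : IsSelfAdjoint T) {ε : ℝ} (hε : 0 < ε) :
    ∃ S : 𝒜, 0 ≤ S ∧ S ≤ 1 ∧ 0 ≤ T * S ∧ T⁺ ≤ T * S + algebraMap ℝ 𝒜 ε := by
  -- `S = h T` for a continuous ramp `h` approximating the indicator of `(0, ∞)`
  set h : ℝ → ℝ := fun t => min (max t 0 / ε) 1
  have hth : ∀ t, 0 ≤ t * h t := fun t => by
    rcases le_total t 0 with ht | ht
    · simp [h, max_eq_right ht]
    · positivity
  have hTS : T * cfc h T = cfc (fun t => t * h t) T := by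
    rw [cfc_mul (fun t => t) h T (hf := by fun_prop) (hg := by fun_prop), cfc_id' ℝ T]
  refine ⟨cfc h T, cfc_nonneg fun t _ => by positivity, cfc_le_one h T fun t _ => min_le_right _ _,
    hTS ▸ cfc_nonneg fun t _ => hth t, ?_⟩
  rw [CFC.posPart_def, cfcₙ_eq_cfc, hTS, ← cfc_const ε T, ← cfc_add ..]
  refine cfc_mono fun t _ => ?_
  rcases le_total t ε with htε | htε
  · have : t⁺ ≤ ε := by rw [_root_.posPart_def]; exact sup_le htε hε.le
    linarith [hth t]
  · have ht : h t = 1 := min_eq_right ((one_le_div hε).mpr (htε.trans (le_max_left _ _)))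
    simp [ht, posPart_eq_self.mpr (hε.le.trans htε), hε.le]

section TraceAlong

variable (e : HilbertBasis ι ℂ H) {A B : H →L[ℂ] H}

theorem isTraceClassAlong_iff_of_nonneg (hA : 0 ≤ A) :
    IsTraceClassAlong e A ↔ Summable fun k => (⟪e k, A (e k)⟫_ℂ).re := by
  rw [IsTraceClassAlong, ← CFC.abs, CFC.abs_of_nonneg A hA]

theorem traceNormAlong_of_nonneg (hA : 0 ≤ A) :
    traceNormAlong e A = ∑' k, (⟪e k, A (e k)⟫_ℂ).re := by
  rw [traceNormAlong, ← CFC.abs, CFC.abs_of_nonneg A hA]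

/-- Both series are iterated sums of `⟪S* √A e j, e k⟫ ⟪e k, √A e j⟫`, which converges absolutely
because `√A` is Hilbert–Schmidt. -/
theorem exists_hasSum_inner_mul_apply (hA : 0 ≤ A) (hAe : IsTraceClassAlong e A)
    (S : H →L[ℂ] H) :
    ∃ σ, HasSum (fun k => ⟪e k, (A * S) (e k)⟫_ℂ) σ ∧
      HasSum (fun j => ⟪CFC.sqrt A (e j), S (CFC.sqrt A (e j))⟫_ℂ) σ := by
  set W := CFC.sqrt A
  have hW : IsSelfAdjoint W := (CFC.sqrt_nonneg A).isSelfAdjoint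
  have hWW : W * W = A := CFC.sqrt_mul_sqrt_self A hA
  have hWe : Summable fun j => ‖W (e j)‖ ^ 2 := by
    simpa only [re_inner_apply_eq_norm_sqrt_apply_sq hA] using
      (isTraceClassAlong_iff_of_nonneg e hA).mp hAe
  have hSWe : Summable fun j => ‖star S (W (e j))‖ ^ 2 := by
    refine .of_nonneg_of_le (fun _ => by positivity) (fun j => ?_) (hWe.mul_left (‖star S‖ ^ 2))
    rw [← mul_pow]
    exact pow_le_pow_left₀ (norm_nonneg _) ((star S).le_opNorm _) 2
  have hq := (e.summable_prod_inner_mul_inner hSWe hWe).hasSum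
  refine ⟨_, (Equiv.prodComm ι ι).hasSum_iff.mpr hq |>.prod_fiberwise fun k => ?_,
    hq.prod_fiberwise fun j => ?_⟩
  · convert e.hasSum_inner_mul_inner (W (e k)) (W (S (e k))) using 1
    · ext j
      simp only [Function.comp_apply, Equiv.prodComm_apply, Prod.fst_swap, Prod.snd_swap]
      rw [star_eq_adjoint, adjoint_inner_left, hW.isSymmetric.apply_clm,
        ← hW.isSymmetric.apply_clm (e k), mul_comm]
    · rw [hW.isSymmetric.apply_clm, ← mul_apply_eq_comp W W, hWW, mul_apply_eq_comp]
  · simpa only [star_eq_adjoint, adjoint_inner_left] using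
      e.hasSum_inner_mul_inner (star S (W (e j))) (W (e j))

theorem summable_inner_mul_apply (hA : 0 ≤ A) (hAe : IsTraceClassAlong e A) (S : H →L[ℂ] H) :
    Summable fun k => ⟪e k, (A * S) (e k)⟫_ℂ := by
  obtain ⟨σ, h, -⟩ := exists_hasSum_inner_mul_apply e hA hAe S
  exact h.summable

theorem hasSum_inner_sqrt_apply_traceAlong_mul (hA : 0 ≤ A) (hAe : IsTraceClassAlong e A)
    (S : H →L[ℂ] H) :
    HasSum (fun j => ⟪CFC.sqrt A (e j), S (CFC.sqrt A (e j))⟫_ℂ) (traceAlong e (A * S)) := by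
  obtain ⟨σ, h₁, h₂⟩ := exists_hasSum_inner_mul_apply e hA hAe S
  rwa [traceAlong, h₁.tsum_eq]

theorem re_traceAlong_of_nonneg (hA : 0 ≤ A) (hAe : IsTraceClassAlong e A) :
    (traceAlong e A).re = traceNormAlong e A := by
  simpa [traceAlong, traceNormAlong_of_nonneg e hA] using
    Complex.re_tsum (summable_inner_mul_apply e hA hAe 1)

theorem traceAlong_mul_sub (hA : 0 ≤ A) (hAe : IsTraceClassAlong e A) (S S' : H →L[ℂ] H) :
    traceAlong e (A * (S - S')) = traceAlong e (A * S) - traceAlong e (A * S') := by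
  rw [mul_sub, traceAlong_sub e (summable_inner_mul_apply e hA hAe S)
    (summable_inner_mul_apply e hA hAe S')]

theorem traceAlong_sub_mul (hA : 0 ≤ A) (hAe : IsTraceClassAlong e A) (hB : 0 ≤ B)
    (hBe : IsTraceClassAlong e B) (S : H →L[ℂ] H) :
    traceAlong e ((A - B) * S) = traceAlong e (A * S) - traceAlong e (B * S) := by
  rw [sub_mul, traceAlong_sub e (summable_inner_mul_apply e hA hAe S)
    (summable_inner_mul_apply e hB hBe S)]

theorem re_traceAlong_mul_nonneg (hA : 0 ≤ A) (hAe : IsTraceClassAlong e A) {S : H →L[ℂ] H}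
    (hS : 0 ≤ S) : 0 ≤ (traceAlong e (A * S)).re :=
  (Complex.hasSum_re (hasSum_inner_sqrt_apply_traceAlong_mul e hA hAe S)).nonneg fun _ =>
    re_inner_apply_nonneg hS _

theorem re_traceAlong_mul_le_of_le (hA : 0 ≤ A) (hAe : IsTraceClassAlong e A)
    {S S' : H →L[ℂ] H} (h : S ≤ S') :
    (traceAlong e (A * S)).re ≤ (traceAlong e (A * S')).re := by
  have := re_traceAlong_mul_nonneg e hA hAe (sub_nonneg.mpr h)
  rw [traceAlong_mul_sub e hA hAe, Complex.sub_re] at this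
  linarith

theorem re_traceAlong_mul_le (hA : 0 ≤ A) (hAe : IsTraceClassAlong e A) {S : H →L[ℂ] H}
    (hS : S ≤ 1) : (traceAlong e (A * S)).re ≤ traceNormAlong e A := by
  simpa [re_traceAlong_of_nonneg e hA hAe] using re_traceAlong_mul_le_of_le e hA hAe hS

theorem sum_re_inner_posPart_sub_le_add (hA : 0 ≤ A) (hAe : IsTraceClassAlong e A) (hB : 0 ≤ B)
    (hBe : IsTraceClassAlong e B) {ε : ℝ} (hε : 0 < ε) (s : Finset ι) :
    ∑ k ∈ s, (⟪e k, (A - B)⁺ (e k)⟫_ℂ).re ≤ traceNormAlong e A + s.card * ε := by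
  obtain ⟨S, hS0, hS1, hTS0, hle⟩ :=
    (hA.isSelfAdjoint.sub hB.isSelfAdjoint).exists_posPart_le_mul_add hε
  have hTSe : Summable fun k => ⟪e k, ((A - B) * S) (e k)⟫_ℂ := by
    simpa only [sub_mul, sub_apply, inner_sub_right] using
      (summable_inner_mul_apply e hA hAe S).sub (summable_inner_mul_apply e hB hBe S)
  calc ∑ k ∈ s, (⟪e k, (A - B)⁺ (e k)⟫_ℂ).re
      ≤ ∑ k ∈ s, ((⟪e k, ((A - B) * S) (e k)⟫_ℂ).re + ε) := by
        refine Finset.sum_le_sum fun k _ => (re_inner_apply_le_of_le hle (e k)).trans_eq ?_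
        simp [Algebra.algebraMap_eq_smul_one, e.orthonormal.1 k]
    _ = ∑ k ∈ s, (⟪e k, ((A - B) * S) (e k)⟫_ℂ).re + s.card * ε := by
        rw [Finset.sum_add_distrib, Finset.sum_const, nsmul_eq_mul]
    _ ≤ (traceAlong e ((A - B) * S)).re + s.card * ε := by
        rw [traceAlong, Complex.re_tsum hTSe]
        gcongr
        exact (Complex.hasSum_re hTSe.hasSum).summable.sum_le_tsum s fun k _ =>
          re_inner_apply_nonneg hTS0 _
    _ ≤ traceNormAlong e A + s.card * ε := by
        rw [traceAlong_sub_mul e hA hAe hB hBe, Complex.sub_re]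
        linarith [re_traceAlong_mul_le e hA hAe hS1, re_traceAlong_mul_nonneg e hB hBe hS0]

theorem sum_re_inner_posPart_sub_le (hA : 0 ≤ A) (hAe : IsTraceClassAlong e A) (hB : 0 ≤ B)
    (hBe : IsTraceClassAlong e B) (s : Finset ι) :
    ∑ k ∈ s, (⟪e k, (A - B)⁺ (e k)⟫_ℂ).re ≤ traceNormAlong e A := by
  refine le_of_forall_pos_le_add fun δ hδ => ?_
  have hs : (0 : ℝ) < s.card + 1 := by positivity
  calc _ ≤ _ + s.card * (δ / (s.card + 1)) :=
        sum_re_inner_posPart_sub_le_add e hA hAe hB hBe (by positivity) s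
    _ ≤ _ + δ := by
        rw [mul_div_left_comm]
        gcongr
        exact mul_le_of_le_one_right hδ.le ((div_le_one hs).mpr (by linarith))

theorem isTraceClassAlong_posPart_sub (hA : 0 ≤ A) (hAe : IsTraceClassAlong e A) (hB : 0 ≤ B)
    (hBe : IsTraceClassAlong e B) : IsTraceClassAlong e (A - B)⁺ :=
  (isTraceClassAlong_iff_of_nonneg e (CFC.posPart_nonneg _)).mpr <|
    summable_of_sum_le (fun k => re_inner_apply_nonneg (CFC.posPart_nonneg (A - B)) (e k))
      (sum_re_inner_posPart_sub_le e hA hAe hB hBe)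

theorem traceNormAlong_eq_add {T : H →L[ℂ] H} (hT : IsSelfAdjoint T)
    (hP : IsTraceClassAlong e T⁺) (hN : IsTraceClassAlong e T⁻) :
    traceNormAlong e T = traceNormAlong e T⁺ + traceNormAlong e T⁻ := by
  rw [traceNormAlong_of_nonneg e (CFC.posPart_nonneg T),
    traceNormAlong_of_nonneg e (CFC.negPart_nonneg T),
    ← ((isTraceClassAlong_iff_of_nonneg e (CFC.posPart_nonneg T)).mp hP).tsum_add
      ((isTraceClassAlong_iff_of_nonneg e (CFC.negPart_nonneg T)).mp hN),
    traceNormAlong, ← CFC.abs, ← CFC.posPart_add_negPart T hT]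
  simp

end TraceAlong

theorem IsDensityOperator.isTraceClassAlong {e : HilbertBasis ι ℂ H} {ρ : H →L[ℂ] H}
    (hρ : IsDensityOperator e ρ) : IsTraceClassAlong e ρ :=
  (isTraceClassAlong_iff_of_nonneg e hρ.nonneg).mpr hρ.2.summable

theorem IsDensityOperator.traceNormAlong_eq_one {e : HilbertBasis ι ℂ H} {ρ : H →L[ℂ] H}
    (hρ : IsDensityOperator e ρ) : traceNormAlong e ρ = 1 := by
  rw [traceNormAlong_of_nonneg e hρ.nonneg, hρ.2.tsum_eq]

section RiemannStieltjes

variable {f F P N : ℝ → ℝ} {a b c I : ℝ}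

theorem exists_partition (hab : a ≤ b) {δ : ℝ} (hδ : 0 < δ) :
    ∃ (n : ℕ) (x : ℕ → ℝ), 0 < n ∧ x 0 = a ∧ x n = b ∧ Monotone x ∧
      ∀ i, x (i + 1) - x i < δ := by
  obtain ⟨n, hn⟩ := exists_nat_gt ((b - a) / δ)
  have hn0 : (0 : ℝ) < n := (div_nonneg (sub_nonneg.mpr hab) hδ.le).trans_lt hn
  refine ⟨n, fun i => a + i * ((b - a) / n), by exact_mod_cast hn0, by simp, ?_,
    fun i j hij => ?_, fun i => ?_⟩
  · field_simp
    ring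
  · dsimp only
    gcongr
  · rw [div_lt_iff₀ hδ] at hn
    have : (b - a) / n < δ := by rwa [div_lt_iff₀ hn0, mul_comm]
    push_cast
    linarith

theorem rsSum_sub (n : ℕ) (x t : ℕ → ℝ) :
    RSSum f (fun y => P y - N y) n x t = RSSum f P n x t - RSSum f N n x t := by
  simp only [RSSum, ← Finset.sum_sub_distrib]
  exact Finset.sum_congr rfl fun _ _ => by ring

theorem abs_rsSum_le_of_monotone {n : ℕ} {x : ℕ → ℝ} (hF : Monotone F) (hx : Monotone x)
    (hf : ∀ i < n, |f (x i)| ≤ c) : |RSSum f F n x x| ≤ c * (F (x n) - F (x 0)) := by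
  have hΔ : ∀ i, 0 ≤ F (x (i + 1)) - F (x i) := fun i => sub_nonneg.mpr (hF (hx i.le_succ))
  calc |RSSum f F n x x| ≤ ∑ i ∈ Finset.range n, |f (x i) * (F (x (i + 1)) - F (x i))| :=
        Finset.abs_sum_le_sum_abs _ _
    _ = ∑ i ∈ Finset.range n, |f (x i)| * (F (x (i + 1)) - F (x i)) := by
        simp only [abs_mul, abs_of_nonneg (hΔ _)]
    _ ≤ ∑ i ∈ Finset.range n, c * (F (x (i + 1)) - F (x i)) :=
        Finset.sum_le_sum fun i hi =>
          mul_le_mul_of_nonneg_right (hf i (Finset.mem_range.mp hi)) (hΔ i)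
    _ = c * (F (x n) - F (x 0)) := by rw [← Finset.mul_sum, Finset.sum_range_sub (fun i => F (x i))]

theorem IsRSIntegral.sub_integrator {F₁ F₂ : ℝ → ℝ} {I₁ I₂ : ℝ} (h₁ : IsRSIntegral f F₁ a b I₁)
    (h₂ : IsRSIntegral f F₂ a b I₂) : IsRSIntegral f (fun y => F₁ y - F₂ y) a b (I₁ - I₂) := by
  intro ε hε
  obtain ⟨δ₁, hδ₁, h₁⟩ := h₁ (ε / 2) (half_pos hε)
  obtain ⟨δ₂, hδ₂, h₂⟩ := h₂ (ε / 2) (half_pos hε)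
  refine ⟨min δ₁ δ₂, lt_min hδ₁ hδ₂, fun n x t hn hx0 hxn hx hδ ht => ?_⟩
  have e₁ := h₁ n x t hn hx0 hxn hx (fun i hi => (hδ i hi).trans_le (min_le_left _ _)) ht
  have e₂ := h₂ n x t hn hx0 hxn hx (fun i hi => (hδ i hi).trans_le (min_le_right _ _)) ht
  rw [rsSum_sub]
  calc _ = |(RSSum f F₁ n x t - I₁) - (RSSum f F₂ n x t - I₂)| := by
        congr 1; ring
    _ ≤ |RSSum f F₁ n x t - I₁| + |RSSum f F₂ n x t - I₂| := abs_sub _ _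
    _ < ε := by linarith

theorem IsRSIntegral.abs_le (h : IsRSIntegral f F a b I) (hab : a ≤ b) {B : ℝ}
    (hB : ∀ (n : ℕ) (x : ℕ → ℝ), x 0 = a → x n = b → Monotone x →
      (∀ i ≤ n, x i ∈ Set.Icc a b) → |RSSum f F n x x| ≤ B) : |I| ≤ B := by
  refine le_of_forall_pos_le_add fun ε hε => ?_
  obtain ⟨δ, hδ, hI⟩ := h ε hε
  obtain ⟨n, x, hn, hx0, hxn, hx, hxδ⟩ := exists_partition hab hδ
  have hRS := hI n x x hn hx0 hxn (fun i _ => hx i.le_succ) (fun i _ => hxδ i)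
    (fun i _ => ⟨le_rfl, hx i.le_succ⟩)
  have hRSB := hB n x hx0 hxn hx fun i hi => ⟨hx0 ▸ hx i.zero_le, hxn ▸ hx hi⟩
  linarith [abs_sub_abs_le_abs_sub I (RSSum f F n x x), abs_sub_comm I (RSSum f F n x x)]

theorem IsRSIntegral.abs_le_of_monotone (h : IsRSIntegral f F a b I) (hab : a ≤ b)
    (hF : Monotone F) (hf : ∀ y ∈ Set.Icc a b, |f y| ≤ c) : |I| ≤ c * (F b - F a) :=
  h.abs_le hab fun n x hx0 hxn hx hmem => by
    simpa only [hx0, hxn] using abs_rsSum_le_of_monotone hF hx fun i hi => hf _ (hmem i hi.le)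

theorem IsRSIntegral.abs_le_of_monotone_sub (h : IsRSIntegral f (fun y => P y - N y) a b I)
    (hab : a ≤ b) (hP : Monotone P) (hN : Monotone N) (hf : ∀ y ∈ Set.Icc a b, |f y| ≤ c) :
    |I| ≤ c * ((P b - P a) + (N b - N a)) :=
  h.abs_le hab fun n x hx0 hxn hx hmem => by
    have hfx : ∀ i < n, |f (x i)| ≤ c := fun i hi => hf _ (hmem i hi.le)
    rw [rsSum_sub, mul_add, ← hx0, ← hxn]
    exact (abs_sub _ _).trans
      (add_le_add (abs_rsSum_le_of_monotone hP hx hfx) (abs_rsSum_le_of_monotone hN hx hfx))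

end RiemannStieltjes

theorem IsProjection.isStarProjection {P : H →L[ℂ] H} (hP : IsProjection P) :
    IsStarProjection P :=
  ⟨hP.2, hP.1⟩

namespace IsSpectralResolution

variable {E : ℝ → H →L[ℂ] H} (e : HilbertBasis ι ℂ H) {A B : H →L[ℂ] H} {f : ℝ → ℝ}
  {a b c I : ℝ}

theorem monotone (hE : IsSpectralResolution E) : Monotone E :=
  fun l m hlm => hE.2 l m hlm

theorem sub_le_one (hE : IsSpectralResolution E) (a b : ℝ) : E b - E a ≤ 1 :=
  (sub_le_self _ (hE.1 a).isStarProjection.nonneg).trans (hE.1 b).isStarProjection.le_one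

theorem monotone_re_traceAlong_mul (hE : IsSpectralResolution E) (hA : 0 ≤ A)
    (hAe : IsTraceClassAlong e A) : Monotone fun l => (traceAlong e (A * E l)).re :=
  fun _ _ hlm => re_traceAlong_mul_le_of_le e hA hAe (hE.monotone hlm)

theorem re_traceAlong_mul_sub_le (hE : IsSpectralResolution E) (hA : 0 ≤ A)
    (hAe : IsTraceClassAlong e A) (a b : ℝ) :
    (traceAlong e (A * E b)).re - (traceAlong e (A * E a)).re ≤ traceNormAlong e A := by
  simpa [traceAlong_mul_sub e hA hAe] using re_traceAlong_mul_le e hA hAe (hE.sub_le_one a b)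

theorem abs_le_of_isRSIntegral (hE : IsSpectralResolution E) (hA : 0 ≤ A)
    (hAe : IsTraceClassAlong e A) (hab : a ≤ b) (hf : ∀ y ∈ Set.Icc a b, |f y| ≤ c)
    (h : IsRSIntegral f (fun l => (traceAlong e (A * E l)).re) a b I) :
    |I| ≤ c * traceNormAlong e A :=
  (h.abs_le_of_monotone hab (hE.monotone_re_traceAlong_mul e hA hAe) hf).trans <|
    mul_le_mul_of_nonneg_left (hE.re_traceAlong_mul_sub_le e hA hAe a b)
      ((abs_nonneg _).trans (hf a ⟨le_rfl, hab⟩))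

/-- The Jordan decomposition `A - B = (A - B)⁺ - (A - B)⁻` splits the integrator into two
increasing functions whose total increases add up to at most the trace norm. -/
theorem abs_le_traceNormAlong_of_isRSIntegral (hE : IsSpectralResolution E) (hA : 0 ≤ A)
    (hAe : IsTraceClassAlong e A) (hB : 0 ≤ B) (hBe : IsTraceClassAlong e B) (hab : a ≤ b)
    (hf : ∀ y ∈ Set.Icc a b, |f y| ≤ c)
    (h : IsRSIntegral f (fun l => (traceAlong e (A * E l)).re - (traceAlong e (B * E l)).re)
      a b I) :
    |I| ≤ c * traceNormAlong e (A - B) := by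
  set T := A - B
  have hT : IsSelfAdjoint T := hA.isSelfAdjoint.sub hB.isSelfAdjoint
  have hP0 : 0 ≤ T⁺ := CFC.posPart_nonneg T
  have hN0 : 0 ≤ T⁻ := CFC.negPart_nonneg T
  have hP := isTraceClassAlong_posPart_sub e hA hAe hB hBe
  have hN : IsTraceClassAlong e T⁻ := by
    simpa only [T, ← neg_sub A B, CFC.posPart_neg] using
      isTraceClassAlong_posPart_sub e hB hBe hA hAe
  have hsplit : ∀ l, (traceAlong e (A * E l)).re - (traceAlong e (B * E l)).re
      = (traceAlong e (T⁺ * E l)).re - (traceAlong e (T⁻ * E l)).re := fun l => by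
    rw [← Complex.sub_re, ← Complex.sub_re, ← traceAlong_sub_mul e hA hAe hB hBe,
      ← traceAlong_sub_mul e hP0 hP hN0 hN, CFC.posPart_sub_negPart T hT]
  simp only [hsplit] at h
  have hc : 0 ≤ c := (abs_nonneg _).trans (hf a ⟨le_rfl, hab⟩)
  calc |I| ≤ c * (((traceAlong e (T⁺ * E b)).re - (traceAlong e (T⁺ * E a)).re) +
        ((traceAlong e (T⁻ * E b)).re - (traceAlong e (T⁻ * E a)).re)) :=
        h.abs_le_of_monotone_sub hab (hE.monotone_re_traceAlong_mul e hP0 hP)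
          (hE.monotone_re_traceAlong_mul e hN0 hN) hf
    _ ≤ c * (traceNormAlong e T⁺ + traceNormAlong e T⁻) := by
        gcongr
        exacts [hE.re_traceAlong_mul_sub_le e hP0 hP a b, hE.re_traceAlong_mul_sub_le e hN0 hN a b]
    _ = c * traceNormAlong e T := by rw [traceNormAlong_eq_add e hT hP hN]

end IsSpectralResolution

theorem payoff_lipschitz_in_traceNorm_general
    {H₁ H₂ : Type*} [NormedAddCommGroup H₁] [InnerProductSpace ℂ H₁] [CompleteSpace H₁]
    [NormedAddCommGroup H₂] [InnerProductSpace ℂ H₂] [CompleteSpace H₂]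
    {ι₁ ι₂ : Type*}
    (e₁ : HilbertBasis ι₁ ℂ H₁) (e₂ : HilbertBasis ι₂ ℂ H₂)
    (B : H₁ →L[ℂ] H₁) (R : H₂ →L[ℂ] H₂)
    (E : ℝ → H₁ →L[ℂ] H₁) (E' : ℝ → H₂ →L[ℂ] H₂)
    (hE : IsSpectralResolution E) (hE' : IsSpectralResolution E')
    (ρ : H₁ →L[ℂ] H₁) (φ₁ φ₂ : H₂ →L[ℂ] H₂)
    (hρ : IsDensityOperator e₁ ρ)
    (hφ₁ : IsDensityOperator e₂ φ₁) (hφ₂ : IsDensityOperator e₂ φ₂)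
    (Z : ℝ → ℝ → ℝ) (M : ℝ)
    (hZ0 : ∀ lam ∈ Set.Icc (lowerBound B) (upperBound B),
      ∀ l ∈ Set.Icc (lowerBound R) (upperBound R), 0 ≤ Z lam l)
    (hZM : ∀ lam ∈ Set.Icc (lowerBound B) (upperBound B),
      ∀ l ∈ Set.Icc (lowerBound R) (upperBound R), Z lam l ≤ M)
    (g : ℝ → ℝ) (K₁ K₂ : ℝ)
    (hg : ∀ l ∈ Set.Icc (lowerBound R) (upperBound R),
      IsRSIntegral (fun lam => Z lam l) (fun lam => (traceAlong e₁ (ρ * E lam)).re)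
        (lowerBound B) (upperBound B) (g l))
    (hK₁ : IsRSIntegral g (fun l => (traceAlong e₂ (φ₁ * E' l)).re)
      (lowerBound R) (upperBound R) K₁)
    (hK₂ : IsRSIntegral g (fun l => (traceAlong e₂ (φ₂ * E' l)).re)
      (lowerBound R) (upperBound R) K₂) :
    |K₁ - K₂| ≤ M * traceNormAlong e₂ (φ₁ - φ₂) := by
  have hgM : ∀ l ∈ Set.Icc (lowerBound R) (upperBound R), |g l| ≤ M := fun l hl => by
    have hZ : ∀ lam ∈ Set.Icc (lowerBound B) (upperBound B), |Z lam l| ≤ M := fun lam hlam =>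
      abs_le.mpr ⟨by linarith [hZ0 lam hlam l hl, hZM lam hlam l hl], hZM lam hlam l hl⟩
    simpa [hρ.traceNormAlong_eq_one] using hE.abs_le_of_isRSIntegral e₁ hρ.nonneg
      hρ.isTraceClassAlong (lowerBound_le_upperBound B) hZ (hg l hl)
  exact hE'.abs_le_traceNormAlong_of_isRSIntegral e₂ hφ₁.nonneg hφ₁.isTraceClassAlong
    hφ₂.nonneg hφ₂.isTraceClassAlong (lowerBound_le_upperBound R) hgM (hK₁.sub_integrator hK₂)

/-- The payoff `K(ρ, ·)` is Lipschitz in trace norm: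
`|K(ρ,φ₁) − K(ρ,φ₂)| ≤ M ‖φ₁ − φ₂‖₁` where `M = max Z`. -/
theorem payoff_lipschitz_in_traceNorm
    {H₁ H₂ : Type*} [NormedAddCommGroup H₁] [InnerProductSpace ℂ H₁] [CompleteSpace H₁]
    [NormedAddCommGroup H₂] [InnerProductSpace ℂ H₂] [CompleteSpace H₂]
    [Nontrivial H₁] [Nontrivial H₂] {ι₁ ι₂ : Type*}
    (e₁ : HilbertBasis ι₁ ℂ H₁) (e₂ : HilbertBasis ι₂ ℂ H₂)
    (B : H₁ →L[ℂ] H₁) (R : H₂ →L[ℂ] H₂)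
    (hB : IsSelfAdjoint B) (hR : IsSelfAdjoint R)
    (E : ℝ → H₁ →L[ℂ] H₁) (E' : ℝ → H₂ →L[ℂ] H₂)
    (hE : IsSpectralResolution E) (hE' : IsSpectralResolution E')
    (ρ : H₁ →L[ℂ] H₁) (φ₁ φ₂ : H₂ →L[ℂ] H₂)
    (hρ : IsDensityOperator e₁ ρ)
    (hφ₁ : IsDensityOperator e₂ φ₁) (hφ₂ : IsDensityOperator e₂ φ₂)
    (Z : ℝ → ℝ → ℝ) (M : ℝ)
    (hZc : ContinuousOn (fun p : ℝ × ℝ => Z p.1 p.2)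
      (Set.Icc (lowerBound B) (upperBound B) ×ˢ Set.Icc (lowerBound R) (upperBound R)))
    (hZ0 : ∀ lam ∈ Set.Icc (lowerBound B) (upperBound B),
      ∀ l ∈ Set.Icc (lowerBound R) (upperBound R), 0 ≤ Z lam l)
    (hZM : ∀ lam ∈ Set.Icc (lowerBound B) (upperBound B),
      ∀ l ∈ Set.Icc (lowerBound R) (upperBound R), Z lam l ≤ M)
    (hMmax : ∃ lam ∈ Set.Icc (lowerBound B) (upperBound B),
      ∃ l ∈ Set.Icc (lowerBound R) (upperBound R), Z lam l = M)
    (g : ℝ → ℝ) (K₁ K₂ : ℝ)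
    (hg : ∀ l ∈ Set.Icc (lowerBound R) (upperBound R),
      IsRSIntegral (fun lam => Z lam l) (fun lam => (traceAlong e₁ (ρ * E lam)).re)
        (lowerBound B) (upperBound B) (g l))
    (hK₁ : IsRSIntegral g (fun l => (traceAlong e₂ (φ₁ * E' l)).re)
      (lowerBound R) (upperBound R) K₁)
    (hK₂ : IsRSIntegral g (fun l => (traceAlong e₂ (φ₂ * E' l)).re)
      (lowerBound R) (upperBound R) K₂) :
    |K₁ - K₂| ≤ M * traceNormAlong e₂ (φ₁ - φ₂) :=
  payoff_lipschitz_in_traceNorm_general e₁ e₂ B R E E' hE hE' ρ φ₁ φ₂ hρ hφ₁ hφ₂ Z M hZ0 hZM g K₁ K₂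
    hg hK₁ hK₂
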